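/- Let o_1, ..., o_n be independent Bernoulli random variables with P[o_m = 1] = p_m(θ), and let f: {0,1}^n → ℝ. Then the gradient of E[f(o)] with respect to θ equals E[ Σ_m ∇_θ p_m(θ)·(f(o) − f(o with coordinate m flipped)) · (2o_m − 1) ], where flipping coordinate m means replacing o_m by 1 − o_m. -/

import Mathlib

/-! Each mass `∏ₘ qₘ(θ)` is differentiated by the product rule; the factor multiplying
`p'ₘ` is the mass with coordinate `m` marginalized out, `P(o) + P(ōₘ)`. Reindexing the `P(ōₘ)`
part by the involution `o ↦ ōₘ`, under which the sign `2 oₘ - 1` flips, turns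
`∑ₒ (P(o) + P(ōₘ)) (2 oₘ - 1) f(o)` into `∑ₒ P(o) (2 oₘ - 1) (f(o) - f(ōₘ))`. -/

open Finset

/-- Probability mass of a joint outcome of independent Bernoulli variables. -/
noncomputable def bernoulliMass {n : ℕ} (p : Fin n → ℝ) (o : Fin n → Bool) : ℝ :=
  ∏ m, if o m then p m else 1 - p m

/-- Flip coordinate `m` of the binary vector `o`. -/
def flipCoord {n : ℕ} (o : Fin n → Bool) (m : Fin n) : Fin n → Bool :=
  Function.update o m (!o m)

/-- The value of the spike `o_m` as a real number. -/
def bval {n : ℕ} (o : Fin n → Bool) (m : Fin n) : ℝ := if o m then 1 else 0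

theorem Function.Involutive.sum_add_comp_mul_eq_sum_mul_sub {α R : Type*} [Fintype α]
    [CommRing R] {σ : α → α} (hσ : Function.Involutive σ) (P s f : α → R)
    (hs : ∀ a, s (σ a) = -s a) :
    ∑ a, (P a + P (σ a)) * s a * f a = ∑ a, P a * s a * (f a - f (σ a)) := by
  have hreindex : ∑ a, P (σ a) * s a * f a = -∑ a, P a * s a * f (σ a) := by
    rw [← hσ.bijective.sum_comp, ← sum_neg_distrib]
    refine sum_congr rfl fun a _ => ?_
    rw [hσ a, hs a]
    ring
  simp only [add_mul, mul_sub, sum_add_distrib, sum_sub_distrib, hreindex]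
  ring

section flipCoord

variable {n : ℕ}

theorem flipCoord_apply_self (o : Fin n → Bool) (m : Fin n) : flipCoord o m m = !o m := by
  simp [flipCoord]

theorem flipCoord_apply_of_ne (o : Fin n → Bool) {j m : Fin n} (h : j ≠ m) :
    flipCoord o m j = o j :=
  Function.update_of_ne h _ _

theorem flipCoord_involutive (m : Fin n) : Function.Involutive (flipCoord · m) := by
  intro o
  funext j
  by_cases h : j = m
  · subst h
    simp [flipCoord_apply_self]
  · simp [flipCoord_apply_of_ne _ h]

theorem bval_flipCoord (o : Fin n → Bool) (m : Fin n) :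
    bval (flipCoord o m) m = 1 - bval o m := by
  cases h : o m <;> simp [bval, flipCoord_apply_self, h]

end flipCoord

section bernoulliMass

variable {n : ℕ}

theorem bernoulliMass_add_bernoulliMass_flipCoord (p : Fin n → ℝ) (o : Fin n → Bool)
    (m : Fin n) :
    bernoulliMass p o + bernoulliMass p (flipCoord o m) =
      ∏ j ∈ univ.erase m, if o j then p j else 1 - p j := by
  have hrest : ∏ j ∈ univ.erase m, (if flipCoord o m j then p j else 1 - p j) =
      ∏ j ∈ univ.erase m, if o j then p j else 1 - p j :=
    prod_congr rfl fun j hj => by rw [flipCoord_apply_of_ne o (ne_of_mem_erase hj)]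
  rw [bernoulliMass, bernoulliMass, ← mul_prod_erase univ _ (mem_univ m),
    ← mul_prod_erase univ _ (mem_univ m), hrest, ← add_mul, flipCoord_apply_self]
  cases o m <;> simp

theorem hasDerivAt_bernoulliFactor {p : ℝ → ℝ} {p' θ₀ : ℝ} (hp : HasDerivAt p p' θ₀)
    (o : Fin n → Bool) (m : Fin n) :
    HasDerivAt (fun θ => if o m then p θ else 1 - p θ) (p' * (2 * bval o m - 1)) θ₀ := by
  cases h : o m
  · simpa [bval, h] using hp.const_sub 1
  · norm_num [bval, h]
    exact hp

theorem hasDerivAt_bernoulliMass {p : Fin n → ℝ → ℝ} {p' : Fin n → ℝ} {θ₀ : ℝ}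
    (hp : ∀ m, HasDerivAt (p m) (p' m) θ₀) (o : Fin n → Bool) :
    HasDerivAt (fun θ => bernoulliMass (fun m => p m θ) o)
      (∑ m, (bernoulliMass (fun m => p m θ₀) o + bernoulliMass (fun m => p m θ₀) (flipCoord o m)) *
        (p' m * (2 * bval o m - 1))) θ₀ := by
  simp only [bernoulliMass_add_bernoulliMass_flipCoord]
  exact HasDerivAt.fun_finsetProd fun m _ => hasDerivAt_bernoulliFactor (hp m) o m

end bernoulliMass

theorem stmt4_general {n : ℕ} (p : Fin n → ℝ → ℝ) (p' : Fin n → ℝ) (θ₀ : ℝ)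
    (hp : ∀ m, HasDerivAt (p m) (p' m) θ₀)
    (f : (Fin n → Bool) → ℝ) :
    HasDerivAt (fun θ => ∑ o : Fin n → Bool, bernoulliMass (fun m => p m θ) o * f o)
      (∑ o : Fin n → Bool, bernoulliMass (fun m => p m θ₀) o *
        ∑ m, p' m * (f o - f (flipCoord o m)) * (2 * bval o m - 1)) θ₀ := by
  refine (HasDerivAt.fun_sum fun o _ =>
    (hasDerivAt_bernoulliMass hp o).mul_const (f o)).congr_deriv ?_
  simp only [sum_mul, mul_sum]
  rw [sum_comm]
  conv_rhs => rw [sum_comm]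
  refine sum_congr rfl fun m _ => ?_
  have hsign (o : Fin n → Bool) :
      p' m * (2 * bval (flipCoord o m) m - 1) = -(p' m * (2 * bval o m - 1)) := by
    rw [bval_flipCoord]
    ring
  rw [(flipCoord_involutive m).sum_add_comp_mul_eq_sum_mul_sub _ _ f hsign]
  exact sum_congr rfl fun o _ => by ring

/-- Local-marginalization gradient estimator: for independent Bernoulli variables
`o_m` with `P[o_m = 1] = p_m(θ)` and `f : {0,1}^n → ℝ`, the derivative of `E[f(o)]` in `θ`
equals `E[Σ_m p_m′(θ) · (f(o) - f(ō_m)) · (2 o_m - 1)]`, where `ō_m` flips coordinate `m`. -/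
theorem stmt4 {n : ℕ} (p : Fin n → ℝ → ℝ) (p' : Fin n → ℝ) (θ₀ : ℝ)
    (hp : ∀ m, HasDerivAt (p m) (p' m) θ₀)
    (hp01 : ∀ m θ, 0 ≤ p m θ ∧ p m θ ≤ 1)
    (f : (Fin n → Bool) → ℝ) :
    HasDerivAt (fun θ => ∑ o : Fin n → Bool, bernoulliMass (fun m => p m θ) o * f o)
      (∑ o : Fin n → Bool, bernoulliMass (fun m => p m θ₀) o *
        ∑ m, p' m * (f o - f (flipCoord o m)) * (2 * bval o m - 1)) θ₀ :=
  stmt4_general p p' θ₀ hp f
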